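/- Let z ∈ ℝ^{2^V} be a point of the t-th level SoS lift of K_G = {x ∈ [0,1]^V : x_i + x_j ≤ 1 for all edges (i,j)} with t ≥ α(G). Then the projection of z onto singleton coordinates is a convex combination of (indicator vectors of) independent sets of G; in particular max{Σ_i w_i z_i : z ∈ SoS_t(K_G)} equals the maximum weight of an independent set. -/

import Mathlib

/-!
Let `ẑ` be `z` restricted to independent sets and `μ` its Möbius transform on the subset lattice,
`μ S = ∑_{T ⊇ S} (-1)^(|T|-|S|) ẑ T`, so that `ẑ S = ∑_{T ⊇ S} μ T`. Then `μ` vanishes off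
independent sets, `∑ μ = z ∅ = 1` and `∑_{T ∋ i} μ T = z {i}`; it remains to see `μ ≥ 0`.
The moment matrix of `ẑ` is `∑_T μ T • 1_{A ⊆ T} 1_{B ⊆ T}`, so against the vector
`g A = (-1)^|A|` on independent `A ⊇ S` its quadratic form is exactly `μ S`. Since independent
sets have size `≤ α(G) ≤ t`, `g` is a legal test vector for the moment matrix of `z`, whose form is
`≥ 0`. The two forms differ only at pairs with `A ∪ B` dependent, and there the edge constraints
give `z (A ∪ B) = 0` if `|A ∪ B| ≥ 3` and `z {i, j} ≤ 0` on an edge `ij`, so the difference has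
the right sign.
-/

open Finset

variable {V : Type*}

/-- `s` is an independent set of `G`. -/
def IsIndep (G : SimpleGraph V) (s : Finset V) : Prop :=
  ∀ u ∈ s, ∀ w ∈ s, u ≠ w → ¬ G.Adj u w

/-- The independence number `α(G)`. -/
noncomputable def indepNum [Fintype V] (G : SimpleGraph V) : ℕ :=
  sSup {n | ∃ s : Finset V, s.card = n ∧ IsIndep G s}

/-- `z` lies in the level-`t` sum-of-squares lift `SoS_t(K_G)` of the edge polytope
`K_G = {x ∈ [0,1]^V : x_i + x_j ≤ 1 ∀ (i,j) ∈ E}`: the moment matrix and all edge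
moment matrices (indexed by sets of size at most `t`) are positive semidefinite,
and `z_∅ = 1`. -/
def InSoS [Fintype V] [DecidableEq V] (G : SimpleGraph V) (t : ℕ)
    (z : Finset V → ℝ) : Prop :=
  z ∅ = 1 ∧
  (Matrix.PosSemidef
    (Matrix.of fun (I J : {I : Finset V // I.card ≤ t}) => z (I.1 ∪ J.1))) ∧
  ∀ i j : V, G.Adj i j →
    Matrix.PosSemidef
      (Matrix.of fun (I J : {I : Finset V // I.card ≤ t}) =>
        z (I.1 ∪ J.1) - z (I.1 ∪ J.1 ∪ {i}) - z (I.1 ∪ J.1 ∪ {j}))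


section Mobius
variable {α R : Type*} [DecidableEq α] [CommRing R]

theorem sum_Icc_neg_one_pow_card (S T : Finset α) :
    ∑ A ∈ Icc S T, (-1 : R) ^ #A = if S = T then (-1) ^ #S else 0 := by
  by_cases hST : S ⊆ T
  · have hdisj : ∀ K ∈ (T \ S).powerset, Disjoint S K := fun K hK =>
      (disjoint_sdiff_self_left.mono_left (mem_powerset.1 hK)).symm
    have hinj : Set.InjOn (S ∪ ·) ((T \ S).powerset : Set (Finset α)) := by
      intro K hK K' hK' h
      have := congrArg (· \ S) h
      simp only [union_sdiff_left] at this
      rwa [(hdisj K hK).symm.sdiff_eq_left, (hdisj K' hK').symm.sdiff_eq_left] at this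
    have key := congrArg (Int.cast : ℤ → R) (sum_powerset_neg_one_pow_card (x := T \ S))
    push_cast at key
    rw [Icc_eq_image_powerset hST, sum_image hinj,
      sum_congr rfl fun K hK => by rw [card_union_of_disjoint (hdisj K hK), pow_add],
      ← mul_sum, key, mul_ite, mul_one, mul_zero]
    exact if_congr (sdiff_eq_empty_iff_subset.trans ⟨hST.antisymm, fun h => h ▸ subset_rfl⟩)
      rfl rfl
  · rw [Icc_eq_empty hST, sum_empty, if_neg fun h => hST h.le]

variable [Fintype α]

def upperMobius (f : Finset α → R) (S : Finset α) : R :=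
  ∑ T with S ⊆ T, (-1) ^ (#T + #S) * f T

theorem sum_upperMobius (f : Finset α → R) (S : Finset α) :
    ∑ T with S ⊆ T, upperMobius f T = f S := by
  calc ∑ T with S ⊆ T, upperMobius f T
      = ∑ J with S ⊆ J, (-1) ^ #J * f J * ∑ T ∈ Icc S J, (-1) ^ #T := by
        unfold upperMobius
        rw [sum_comm' (t' := {J | S ⊆ J}) (s' := fun J => Icc S J)]
        · refine sum_congr rfl fun J _ => ?_
          rw [mul_sum]
          exact sum_congr rfl fun T _ => by ring
        · intro T J
          simp only [mem_filter, mem_univ, true_and, mem_Icc]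
          exact ⟨fun h => ⟨⟨h.1, h.2⟩, h.1.trans h.2⟩, fun h => ⟨h.1.1, h.1.2⟩⟩
    _ = f S := by
      simp_rw [sum_Icc_neg_one_pow_card, mul_ite, mul_zero]
      rw [sum_ite_eq, if_pos (mem_filter.2 ⟨mem_univ _, subset_rfl⟩), mul_right_comm, ← pow_add,
        Even.neg_one_pow ⟨_, rfl⟩, one_mul]

theorem upperMobius_eq_zero (f : Finset α → R) {S : Finset α} (h : ∀ T, S ⊆ T → f T = 0) :
    upperMobius f S = 0 :=
  sum_eq_zero fun T hT => by rw [h T (mem_filter.1 hT).2, mul_zero]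

theorem sum_sum_mul_apply_union_mul_eq_sum_upperMobius (f g : Finset α → R) :
    ∑ A, ∑ B, g A * f (A ∪ B) * g B = ∑ T, upperMobius f T * (∑ A with A ⊆ T, g A) ^ 2 := by
  simp_rw [← sum_upperMobius f (_ ∪ _), sq, sum_filter, sum_mul, mul_sum, union_subset_iff]
  conv_rhs => rw [sum_comm]; arg 2; ext A; rw [sum_comm]
  refine sum_congr rfl fun A _ => sum_congr rfl fun B _ => ?_
  rw [sum_mul]
  refine sum_congr rfl fun T _ => ?_
  simp only [ite_and, ite_mul, mul_ite, zero_mul, mul_zero]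
  split_ifs <;> ring

end Mobius

theorem sum_subtype_card_le_eq_sum {M : Type*} [AddCommMonoid M] [Fintype V] {t : ℕ}
    (F : Finset V → M) (hF : ∀ A, t < #A → F A = 0) :
    ∑ I : {I : Finset V // #I ≤ t}, F I = ∑ A, F A := by
  rw [← sum_subtype {A | #A ≤ t} (by simp), sum_filter_of_ne fun A _ hA => ?_]
  by_contra h
  exact hA (hF A (not_le.1 h))

section MomentMatrix
variable [DecidableEq V] {t : ℕ} {f : Finset V → ℝ}

def momentMatrix (t : ℕ) (f : Finset V → ℝ) :
    Matrix {I : Finset V // #I ≤ t} {I : Finset V // #I ≤ t} ℝ :=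
  Matrix.of fun I J => f (I.1 ∪ J.1)

theorem sum_sum_mul_apply_union_mul_nonneg [Fintype V] (hf : (momentMatrix t f).PosSemidef)
    (g : Finset V → ℝ) (hg : ∀ A, t < #A → g A = 0) : 0 ≤ ∑ A, ∑ B, g A * f (A ∪ B) * g B := by
  have h := hf.dotProduct_mulVec_nonneg fun I => g I.1
  simp only [star_trivial, dotProduct, Matrix.mulVec, momentMatrix, Matrix.of_apply, mul_sum] at h
  rw [sum_congr rfl fun I _ => sum_subtype_card_le_eq_sum (fun B => g I.1 * (f (I.1 ∪ B) * g B))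
    fun B hB => by rw [hg B hB, mul_zero, mul_zero], sum_subtype_card_le_eq_sum
    (fun A => ∑ B, g A * (f (A ∪ B) * g B)) fun A hA => by simp [hg A hA]] at h
  simpa only [mul_assoc] using h

theorem apply_nonneg_of_posSemidef_momentMatrix (hf : (momentMatrix t f).PosSemidef) {A : Finset V}
    (hA : #A ≤ t) : 0 ≤ f A := by
  simpa [momentMatrix] using hf.diag_nonneg (i := ⟨A, hA⟩)

theorem apply_union_eq_zero_of_posSemidef_momentMatrix [Fintype V]
    (hf : (momentMatrix t f).PosSemidef) {A B : Finset V} (hA : #A ≤ t) (hB : #B ≤ t)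
    (hfA : f A = 0) : f (B ∪ A) = 0 := by
  have h := (hf.dotProduct_mulVec_zero_iff (Pi.single ⟨A, hA⟩ 1)).1 (by simp [momentMatrix, hfA])
  simpa [momentMatrix] using congrFun h ⟨B, hB⟩

end MomentMatrix

section Graph
variable {G : SimpleGraph V}

theorem IsIndep.mono {s t : Finset V} (hst : s ⊆ t) (ht : IsIndep G t) : IsIndep G s :=
  fun u hu w hw => ht u (hst hu) w (hst hw)

theorem exists_adj_of_not_isIndep {s : Finset V} (h : ¬ IsIndep G s) :
    ∃ u ∈ s, ∃ w ∈ s, G.Adj u w := by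
  simp only [IsIndep, not_forall, not_not] at h
  obtain ⟨u, hu, w, hw, -, huw⟩ := h
  exact ⟨u, hu, w, hw, huw⟩

theorem isIndep_empty : IsIndep G ∅ :=
  fun u hu => absurd hu (notMem_empty u)

theorem isIndep_singleton (v : V) : IsIndep G {v} := by
  intro u hu w hw huw
  rw [mem_singleton] at hu hw
  exact absurd (hu.trans hw.symm) huw

theorem IsIndep.card_le_indepNum [Fintype V] {s : Finset V} (hs : IsIndep G s) :
    #s ≤ indepNum G :=
  le_csSup ⟨Fintype.card V, by rintro n ⟨s, rfl, -⟩; exact card_le_univ s⟩ ⟨s, rfl, hs⟩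

noncomputable def restrictIndep (G : SimpleGraph V) (z : Finset V → ℝ) : Finset V → ℝ :=
  {W | IsIndep G W}.indicator z

noncomputable def indepSign (G : SimpleGraph V) (S : Finset V) : Finset V → ℝ :=
  {A | IsIndep G A ∧ S ⊆ A}.indicator fun A => (-1) ^ #A

theorem restrictIndep_of_isIndep (z : Finset V → ℝ) {S : Finset V} (hS : IsIndep G S) :
    restrictIndep G z S = z S :=
  Set.indicator_of_mem (s := {W | IsIndep G W}) hS z

theorem restrictIndep_of_not_isIndep (z : Finset V → ℝ) {S : Finset V} (hS : ¬ IsIndep G S) :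
    restrictIndep G z S = 0 :=
  Set.indicator_of_notMem (s := {W | IsIndep G W}) hS z

end Graph

theorem exists_sum_mul_le {β : Type*} [Fintype β] {μ : β → ℝ} (hμ0 : ∀ b, 0 ≤ μ b)
    (hμ1 : ∑ b, μ b = 1) (F : β → ℝ) : ∃ b, μ b ≠ 0 ∧ ∑ b', μ b' * F b' ≤ F b := by
  have hne : (univ.filter fun b => μ b ≠ 0).Nonempty := by
    by_contra h
    simp only [not_nonempty_iff_eq_empty, filter_eq_empty_iff, mem_univ, true_implies,
      not_not] at h
    simp [h] at hμ1
  obtain ⟨b, hb, hmax⟩ := exists_max_image _ F hne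
  refine ⟨b, (mem_filter.1 hb).2, ?_⟩
  calc ∑ b', μ b' * F b' ≤ ∑ b', μ b' * F b := sum_le_sum fun b' _ => by
        by_cases h : μ b' = 0
        · simp [h]
        · exact mul_le_mul_of_nonneg_left (hmax b' (mem_filter.2 ⟨mem_univ _, h⟩)) (hμ0 b')
    _ = F b := by rw [← sum_mul, hμ1, one_mul]

theorem exists_sum_mul_le_sum_of_eq_sum_indicator {ι : Type*} [Fintype ι] [DecidableEq ι]
    {μ : Finset ι → ℝ} {x : ι → ℝ} (hμ0 : ∀ s, 0 ≤ μ s) (hμ1 : ∑ s, μ s = 1)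
    (hx : ∀ i, x i = ∑ s, μ s * (if i ∈ s then 1 else 0)) (w : ι → ℝ) :
    ∃ s, μ s ≠ 0 ∧ ∑ i, w i * x i ≤ ∑ i ∈ s, w i := by
  obtain ⟨s, hs, hle⟩ := exists_sum_mul_le hμ0 hμ1 fun s => ∑ i ∈ s, w i
  refine ⟨s, hs, le_of_eq_of_le ?_ hle⟩
  simp_rw [hx, mul_sum, sum_comm (s := univ (α := ι)), mul_ite, mul_one, mul_zero, sum_ite_mem,
    univ_inter]
  exact sum_congr rfl fun s _ => sum_congr rfl fun i _ => mul_comm _ _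

section Restrict
variable [Fintype V] [DecidableEq V] {G : SimpleGraph V}

theorem upperMobius_restrictIndep_eq_zero (z : Finset V → ℝ) {S : Finset V}
    (hS : ¬ IsIndep G S) : upperMobius (restrictIndep G z) S = 0 :=
  upperMobius_eq_zero _ fun _ hST => restrictIndep_of_not_isIndep z fun hT => hS (hT.mono hST)

theorem IsIndep.sq_sum_subset_indepSign {T : Finset V} (hT : IsIndep G T) (S : Finset V) :
    (∑ A with A ⊆ T, indepSign G S A) ^ 2 = if S = T then 1 else 0 := by
  have hsum : ∑ A with A ⊆ T, indepSign G S A = ∑ A ∈ Icc S T, (-1) ^ #A := by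
    rw [filter_subset_univ, Icc_eq_filter_powerset, sum_filter]
    refine sum_congr rfl fun A hA => ?_
    by_cases hSA : S ⊆ A
    · rw [indepSign, Set.indicator_of_mem (show A ∈ {A | IsIndep G A ∧ S ⊆ A} from
        ⟨hT.mono (mem_powerset.1 hA), hSA⟩), if_pos hSA]
    · rw [indepSign, Set.indicator_of_notMem fun h => hSA h.2, if_neg hSA]
  rw [hsum, sum_Icc_neg_one_pow_card]
  split_ifs <;> simp [← pow_mul]

theorem sum_sum_indepSign_mul_restrictIndep_union_mul (z : Finset V → ℝ) (S : Finset V) :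
    ∑ A, ∑ B, indepSign G S A * restrictIndep G z (A ∪ B) * indepSign G S B =
      upperMobius (restrictIndep G z) S := by
  rw [sum_sum_mul_apply_union_mul_eq_sum_upperMobius]
  trans ∑ T, if S = T then upperMobius (restrictIndep G z) T else 0
  · refine sum_congr rfl fun T _ => ?_
    by_cases hT : IsIndep G T
    · rw [hT.sq_sum_subset_indepSign, mul_ite, mul_one, mul_zero]
    · rw [upperMobius_restrictIndep_eq_zero z hT, zero_mul, ite_self]
  · rw [sum_ite_eq, if_pos (mem_univ S)]

end Restrict

section SoS
variable [Fintype V] [DecidableEq V] {G : SimpleGraph V} {t : ℕ} {z : Finset V → ℝ}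

namespace InSoS

theorem apply_nonneg (hz : InSoS G t z) {A : Finset V} (hA : #A ≤ t) : 0 ≤ z A :=
  apply_nonneg_of_posSemidef_momentMatrix hz.2.1 hA

theorem apply_union_add_apply_union_le (hz : InSoS G t z) {i j : V} (hij : G.Adj i j)
    {A : Finset V} (hA : #A ≤ t) : z (A ∪ {i}) + z (A ∪ {j}) ≤ z A := by
  have := apply_nonneg_of_posSemidef_momentMatrix (f := fun W => z W - z (W ∪ {i}) - z (W ∪ {j}))
    (hz.2.2 i j hij) hA
  linarith

theorem apply_eq_zero_of_adj (hz : InSoS G t z) {A : Finset V} (hA : #A ≤ t) {i j : V}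
    (hi : i ∈ A) (hj : j ∈ A) (hij : G.Adj i j) : z A = 0 := by
  have := hz.apply_union_add_apply_union_le hij hA
  rw [union_eq_left.2 (singleton_subset_iff.2 hi), union_eq_left.2 (singleton_subset_iff.2 hj)]
    at this
  linarith [hz.apply_nonneg hA]

theorem apply_eq_zero_of_not_isIndep (hz : InSoS G t z) {W : Finset V} (h3 : 3 ≤ #W)
    (hW : #W ≤ 2 * t) (hWi : ¬ IsIndep G W) : z W = 0 := by
  obtain ⟨u, hu, w, hw, huw⟩ := exists_adj_of_not_isIndep hWi
  -- split `W` into two parts of size `≤ t`, the first containing the edge `uw`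
  obtain ⟨A, huwA, hAW, hA⟩ := exists_subsuperset_card_eq
    (insert_subset hu (singleton_subset_iff.2 hw)) (n := max 2 (#W - t))
    (by rw [card_pair huw.ne]; exact le_max_left ..) (max_le (by omega) (by omega))
  have hAt : #A ≤ t := by omega
  have hzA := hz.apply_eq_zero_of_adj hAt (huwA (mem_insert_self ..)) (huwA (by simp)) huw
  rw [← union_sdiff_of_subset hAW, union_comm]
  exact apply_union_eq_zero_of_posSemidef_momentMatrix hz.2.1 hAt
    (by rw [card_sdiff_of_subset hAW]; omega) hzA

theorem neg_one_pow_mul_apply_union_nonpos (hz : InSoS G t z) {A B : Finset V}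
    (hA : IsIndep G A) (hB : IsIndep G B) (hAt : #A ≤ t) (hBt : #B ≤ t)
    (hAB : ¬ IsIndep G (A ∪ B)) : (-1) ^ (#A + #B) * z (A ∪ B) ≤ 0 := by
  obtain ⟨u, hu, w, hw, huw⟩ := exists_adj_of_not_isIndep hAB
  have hcard := card_union_le A B
  rcases le_or_gt 3 #(A ∪ B) with h3 | h2
  · rw [hz.apply_eq_zero_of_not_isIndep h3 (by omega) hAB, mul_zero]
  -- otherwise `A ∪ B` is the edge `{u, w}` and `A`, `B` are its two singletons
  have hpair : {u, w} = A ∪ B := eq_of_subset_of_card_le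
    (insert_subset hu (singleton_subset_iff.2 hw)) (by rw [card_pair huw.ne]; omega)
  have hle_one : ∀ C ⊆ A ∪ B, IsIndep G C → #C ≤ 1 := by
    intro C hC hCi
    by_contra h
    have hC2 : C = {u, w} :=
      eq_of_subset_of_card_le (hC.trans hpair.ge) (by rw [card_pair huw.ne]; omega)
    exact hCi u (by simp [hC2]) w (by simp [hC2]) huw.ne huw
  have hA1 := hle_one A subset_union_left hA
  have hB1 := hle_one B subset_union_right hB
  have hpair2 : #(A ∪ B) = 2 := by rw [← hpair, card_pair huw.ne]
  have := hz.apply_union_add_apply_union_le huw (A := {u}) (by rw [card_singleton]; omega)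
  rw [union_self, ← insert_eq, hpair] at this
  rw [show #A + #B = 2 by omega]
  linarith

theorem indepSign_mul_apply_union_mul_le (hz : InSoS G t z) (ht : indepNum G ≤ t)
    (S A B : Finset V) : indepSign G S A * z (A ∪ B) * indepSign G S B ≤
      indepSign G S A * restrictIndep G z (A ∪ B) * indepSign G S B := by
  by_cases hA : A ∈ {A | IsIndep G A ∧ S ⊆ A}
  swap
  · simp [indepSign, Set.indicator_of_notMem hA]
  by_cases hB : B ∈ {A | IsIndep G A ∧ S ⊆ A}
  swap
  · simp [indepSign, Set.indicator_of_notMem hB]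
  by_cases hAB : IsIndep G (A ∪ B)
  · rw [restrictIndep_of_isIndep z hAB]
  rw [restrictIndep_of_not_isIndep z hAB, indepSign, Set.indicator_of_mem hA, Set.indicator_of_mem hB, mul_zero, zero_mul]
  have := hz.neg_one_pow_mul_apply_union_nonpos hA.1 hB.1
    (hA.1.card_le_indepNum.trans ht) (hB.1.card_le_indepNum.trans ht) hAB
  calc (-1) ^ #A * z (A ∪ B) * (-1) ^ #B = (-1) ^ (#A + #B) * z (A ∪ B) := by ring
    _ ≤ 0 := this

theorem upperMobius_restrictIndep_nonneg (hz : InSoS G t z) (ht : indepNum G ≤ t)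
    (S : Finset V) : 0 ≤ upperMobius (restrictIndep G z) S := by
  have hsupp : ∀ A, t < #A → indepSign G S A = 0 := fun A hA =>
    Set.indicator_of_notMem (fun h => (h.1.card_le_indepNum.trans ht).not_gt hA) _
  calc 0 ≤ ∑ A, ∑ B, indepSign G S A * z (A ∪ B) * indepSign G S B :=
        sum_sum_mul_apply_union_mul_nonneg hz.2.1 _ hsupp
    _ ≤ ∑ A, ∑ B, indepSign G S A * restrictIndep G z (A ∪ B) * indepSign G S B :=
        sum_le_sum fun A _ => sum_le_sum fun B _ => hz.indepSign_mul_apply_union_mul_le ht S A B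
    _ = upperMobius (restrictIndep G z) S := sum_sum_indepSign_mul_restrictIndep_union_mul z S

end InSoS

end SoS

/-- Rothvoss-style exactness: if `t ≥ α(G)` and `z ∈ SoS_t(K_G)`, then the
projection of `z` onto singleton coordinates is a convex combination of indicator
vectors of independent sets of `G`; in particular, for any nonnegative weights, the
SoS objective is at most the maximum weight of an independent set. -/
theorem sos_exact_of_indepNum_le [Fintype V] [DecidableEq V]
    (G : SimpleGraph V) (t : ℕ) (z : Finset V → ℝ)
    (hz : InSoS G t z) (ht : indepNum G ≤ t) :
    (∃ μ : Finset V → ℝ, (∀ s, 0 ≤ μ s) ∧ (∀ s, μ s ≠ 0 → IsIndep G s) ∧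
      (∑ s : Finset V, μ s = 1) ∧
      ∀ i : V, z {i} = ∑ s : Finset V, μ s * (if i ∈ s then 1 else 0)) ∧
    ∀ w : V → ℝ, (∀ i, 0 ≤ w i) →
      ∃ s : Finset V, IsIndep G s ∧ ∑ i : V, w i * z {i} ≤ ∑ i ∈ s, w i := by
  set μ := upperMobius (restrictIndep G z) with hμ
  have hμ0 : ∀ s, 0 ≤ μ s := hz.upperMobius_restrictIndep_nonneg ht
  have hsupp : ∀ s, μ s ≠ 0 → IsIndep G s := fun s hs =>
    by_contra fun h => hs (upperMobius_restrictIndep_eq_zero z h)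
  have hμ1 : ∑ s, μ s = 1 := by
    have := sum_upperMobius (restrictIndep G z) ∅
    rwa [filter_true_of_mem fun s _ => empty_subset s, restrictIndep_of_isIndep z isIndep_empty,
      hz.1] at this
  have hmarg : ∀ i, z {i} = ∑ s, μ s * (if i ∈ s then 1 else 0) := fun i => by
    simp_rw [mul_ite, mul_one, mul_zero, ← sum_filter, ← singleton_subset_iff, hμ, sum_upperMobius]
    exact (restrictIndep_of_isIndep z (isIndep_singleton i)).symm
  refine ⟨⟨μ, hμ0, hsupp, hμ1, hmarg⟩, fun w _ => ?_⟩
  obtain ⟨s, hs, hle⟩ := exists_sum_mul_le_sum_of_eq_sum_indicator hμ0 hμ1 hmarg w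
  exact ⟨s, hsupp s hs, hle⟩
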